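/- With the setup of the previous statement (M* symmetric PSD of rank r, M = M* + H, ‖H‖₂ ≤ σ₁*/8), the top unit eigenvector a₁ of M satisfies ∑_{j=1}^r (a₁ᵀ a_j*)² ≥ 1 − 2.4 ‖H‖₂² / (σ₁*)², and hence (a₁ᵀ a₁*)² ≥ 1 − 2.4 ‖H‖₂²/(σ₁*)² − ∑_{j=2}^r (a₁ᵀ a_j*)². -/

import Mathlib

open Matrix Finset

/-- Euclidean norm of a vector in `Fin d → ℝ`. -/
noncomputable def vnorm {d : ℕ} (x : Fin d → ℝ) : ℝ := Real.sqrt (∑ i, x i ^ 2)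

/-- Spectral (ℓ₂ operator) norm of a real matrix. -/
noncomputable def specNorm {d : ℕ} (A : Matrix (Fin d) (Fin d) ℝ) : ℝ :=
  sSup {y : ℝ | ∃ x : Fin d → ℝ, vnorm x = 1 ∧ y = vnorm (A.mulVec x)}

/-!
Let `q = a₁ - ∑ⱼ (a₁ ⬝ a⋆ⱼ) a⋆ⱼ` be the component of `a₁` orthogonal to the column space of `M⋆`,
so that `‖q‖² = q ⬝ a₁ = 1 - ∑ⱼ (a₁ ⬝ a⋆ⱼ)²`. Since `q ⟂ M⋆ a₁`,
`σ₁ ‖q‖² = q ⬝ M a₁ = q ⬝ H a₁ ≤ ‖q‖ ‖H‖`, whence `‖q‖ ≤ ‖H‖ / σ₁`. The Rayleigh quotient of `M`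
at `a⋆₁` gives `σ₁ ≥ σ⋆₁ - ‖H‖ ≥ 7σ⋆₁/8`, so `‖q‖² ≤ (64/49) ‖H‖² / σ⋆₁² ≤ 2.4 ‖H‖² / σ⋆₁²`.
-/

section Orthonormal

variable {R ι n : Type*} [CommRing R] [Fintype n] {s : Finset ι} {v : ι → n → R}

theorem dotProduct_sum_smul_eq_zero {y : n → R} (hy : ∀ j ∈ s, y ⬝ᵥ v j = 0) (c : ι → R) :
    y ⬝ᵥ ∑ j ∈ s, c j • v j = 0 := by
  rw [dotProduct_sum]
  exact sum_eq_zero fun j hj => by rw [dotProduct_smul, hy j hj, smul_zero]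

theorem sum_smul_vecMulVec_mulVec (σ : ι → R) (x : n → R) :
    (∑ j ∈ s, σ j • vecMulVec (v j) (v j)) *ᵥ x = ∑ j ∈ s, (σ j * (v j ⬝ᵥ x)) • v j := by
  simp only [sum_mulVec, smul_mulVec, vecMulVec_mulVec, op_smul_eq_smul, smul_smul]

def projResidual (s : Finset ι) (v : ι → n → R) (x : n → R) : n → R :=
  x - ∑ j ∈ s, (x ⬝ᵥ v j) • v j

theorem projResidual_dotProduct_self (x : n → R) :
    projResidual s v x ⬝ᵥ x = x ⬝ᵥ x - ∑ j ∈ s, (x ⬝ᵥ v j) ^ 2 := by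
  rw [projResidual, sub_dotProduct, sum_dotProduct]
  simp only [smul_dotProduct, smul_eq_mul, dotProduct_comm (v _) x, sq]

variable [DecidableEq ι] (hv : ∀ i ∈ s, ∀ j ∈ s, v i ⬝ᵥ v j = if i = j then 1 else 0)
include hv

theorem dotProduct_sum_smul_of_orthonormal {i : ι} (hi : i ∈ s) (c : ι → R) :
    v i ⬝ᵥ ∑ j ∈ s, c j • v j = c i := by
  rw [dotProduct_sum, sum_congr rfl fun j hj => by
    rw [dotProduct_smul, hv i hi j hj, smul_eq_mul, mul_ite, mul_one, mul_zero]]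
  rw [sum_ite_eq, if_pos hi]

theorem dotProduct_sum_smul_vecMulVec_mulVec_of_orthonormal (σ : ι → R) {i : ι} (hi : i ∈ s) :
    v i ⬝ᵥ (∑ j ∈ s, σ j • vecMulVec (v j) (v j)) *ᵥ v i = σ i := by
  rw [sum_smul_vecMulVec_mulVec, dotProduct_sum_smul_of_orthonormal hv hi,
    (by simpa using hv i hi i hi : v i ⬝ᵥ v i = 1), mul_one]

theorem projResidual_dotProduct_of_mem (x : n → R) {i : ι} (hi : i ∈ s) :
    projResidual s v x ⬝ᵥ v i = 0 := by
  rw [dotProduct_comm, projResidual, dotProduct_sub, dotProduct_sum_smul_of_orthonormal hv hi,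
    dotProduct_comm, sub_self]

theorem projResidual_dotProduct_projResidual (x : n → R) :
    projResidual s v x ⬝ᵥ projResidual s v x = x ⬝ᵥ x - ∑ j ∈ s, (x ⬝ᵥ v j) ^ 2 := by
  nth_rewrite 2 [projResidual]
  rw [dotProduct_sub,
    dotProduct_sum_smul_eq_zero (fun j hj => projResidual_dotProduct_of_mem hv x hj), sub_zero,
    projResidual_dotProduct_self]

end Orthonormal

section Norms

variable {d : ℕ}

theorem vnorm_nonneg (x : Fin d → ℝ) : 0 ≤ vnorm x := Real.sqrt_nonneg _

theorem vnorm_eq_sqrt_dotProduct (x : Fin d → ℝ) : vnorm x = √(x ⬝ᵥ x) := by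
  simp only [vnorm, dotProduct, sq]

theorem vnorm_sq (x : Fin d → ℝ) : vnorm x ^ 2 = x ⬝ᵥ x := by
  rw [vnorm, Real.sq_sqrt (by positivity)]
  simp only [dotProduct, sq]

theorem abs_dotProduct_le_vnorm_mul_vnorm (x y : Fin d → ℝ) : |x ⬝ᵥ y| ≤ vnorm x * vnorm y := by
  rw [vnorm, vnorm, ← Real.sqrt_mul (by positivity), ← Real.sqrt_sq_eq_abs]
  exact Real.sqrt_le_sqrt (sum_mul_sq_le_sq_mul_sq univ x y)

theorem bddAbove_vnorm_mulVec (A : Matrix (Fin d) (Fin d) ℝ) :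
    BddAbove {y : ℝ | ∃ x : Fin d → ℝ, vnorm x = 1 ∧ y = vnorm (A *ᵥ x)} := by
  refine ⟨√(∑ i, ∑ j, A i j ^ 2), ?_⟩
  rintro y ⟨x, hx, rfl⟩
  have hx2 : ∑ j, x j ^ 2 = 1 := by rwa [vnorm, Real.sqrt_eq_one] at hx
  refine Real.sqrt_le_sqrt (sum_le_sum fun i _ => ?_)
  simpa only [mulVec, dotProduct, hx2, mul_one] using sum_mul_sq_le_sq_mul_sq univ (A i) x

theorem abs_dotProduct_mulVec_le (A : Matrix (Fin d) (Fin d) ℝ) (x : Fin d → ℝ)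
    {u : Fin d → ℝ} (hu : vnorm u = 1) : |x ⬝ᵥ A *ᵥ u| ≤ vnorm x * specNorm A :=
  (abs_dotProduct_le_vnorm_mul_vnorm x _).trans <| mul_le_mul_of_nonneg_left
    (le_csSup (bddAbove_vnorm_mulVec A) ⟨u, hu, rfl⟩) (vnorm_nonneg x)

end Norms

section Perturbation

variable {d : ℕ} {A H : Matrix (Fin d) (Fin d) ℝ} {σ : ℝ}

theorem sub_specNorm_le_of_rayleigh_le (htop : ∀ x, x ⬝ᵥ (A + H) *ᵥ x ≤ σ * (x ⬝ᵥ x))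
    {u : Fin d → ℝ} (hu : vnorm u = 1) : u ⬝ᵥ A *ᵥ u - specNorm H ≤ σ := by
  have hrayleigh := htop u
  rw [add_mulVec, dotProduct_add, ← vnorm_sq, hu, one_pow, mul_one] at hrayleigh
  have hH := abs_dotProduct_mulVec_le H u hu
  rw [hu, one_mul] at hH
  linarith [neg_abs_le (u ⬝ᵥ H *ᵥ u)]

theorem eigenvalue_mul_dotProduct_le {a q : Fin d → ℝ} (heig : (A + H) *ᵥ a = σ • a)
    (ha : vnorm a = 1) (hq : q ⬝ᵥ A *ᵥ a = 0) : σ * (q ⬝ᵥ a) ≤ vnorm q * specNorm H := by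
  have hσ : σ * (q ⬝ᵥ a) = q ⬝ᵥ H *ᵥ a := by
    rw [← smul_eq_mul, ← dotProduct_smul, ← heig, add_mulVec, dotProduct_add, hq, zero_add]
  exact hσ ▸ (le_abs_self _).trans (abs_dotProduct_mulVec_le H q ha)

end Perturbation

theorem sq_le_of_eigenvalue_mul_sq_le {σ₀ σ₁ ε s : ℝ} (hσ₀ : 0 < σ₀) (hε : ε ≤ σ₀ / 8)
    (hσ₁ : σ₀ - ε ≤ σ₁) (hs : 0 ≤ s) (h : σ₁ * s ^ 2 ≤ s * ε) :
    s ^ 2 ≤ 2.4 * ε ^ 2 / σ₀ ^ 2 := by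
  rcases hs.eq_or_lt with rfl | hs
  · rw [zero_pow two_ne_zero]; positivity
  have hσ₁s : σ₁ * s ≤ ε := le_of_mul_le_mul_left (by linarith) hs
  have hlin : 7 / 8 * σ₀ * s ≤ ε := by nlinarith
  have hsq := pow_le_pow_left₀ (by positivity) hlin 2
  rw [le_div_iff₀ (by positivity)]
  nlinarith

theorem inner_ub_to_inner_lb_general {d r : ℕ} (hr : 0 < r)
    (Mstar H M : Matrix (Fin d) (Fin d) ℝ)
    (hM : M = Mstar + H)
    (σs : ℕ → ℝ) (as : ℕ → Fin d → ℝ)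
    (hpos : ∀ j, j < r → 0 < σs j)
    (hortho : ∀ i j, i < r → j < r → as i ⬝ᵥ as j = if i = j then 1 else 0)
    (hdecomp : Mstar = ∑ j ∈ Finset.range r, σs j • vecMulVec (as j) (as j))
    (σ1 : ℝ) (a1 : Fin d → ℝ) (ha1 : vnorm a1 = 1)
    (heig : M.mulVec a1 = σ1 • a1)
    (htop : ∀ x : Fin d → ℝ, x ⬝ᵥ M.mulVec x ≤ σ1 * (x ⬝ᵥ x))
    (hH : specNorm H ≤ σs 0 / 8) :
    (1 - 2.4 * specNorm H ^ 2 / σs 0 ^ 2 ≤ ∑ j ∈ Finset.range r, (a1 ⬝ᵥ as j) ^ 2) ∧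
    (1 - 2.4 * specNorm H ^ 2 / σs 0 ^ 2 - ∑ j ∈ Finset.Ico 1 r, (a1 ⬝ᵥ as j) ^ 2
      ≤ (a1 ⬝ᵥ as 0) ^ 2) := by
  subst hM
  have hv : ∀ i ∈ range r, ∀ j ∈ range r, as i ⬝ᵥ as j = if i = j then 1 else 0 :=
    fun i hi j hj => hortho i j (mem_range.1 hi) (mem_range.1 hj)
  have h0 : 0 ∈ range r := mem_range.2 hr
  set q := projResidual (range r) as a1
  have hqq : vnorm q ^ 2 = 1 - ∑ j ∈ range r, (a1 ⬝ᵥ as j) ^ 2 := by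
    rw [vnorm_sq, projResidual_dotProduct_projResidual hv, ← vnorm_sq, ha1, one_pow]
  have hσ1 : σs 0 - specNorm H ≤ σ1 := by
    have hunit : vnorm (as 0) = 1 := by
      rw [vnorm_eq_sqrt_dotProduct, hortho 0 0 hr hr, if_pos rfl, Real.sqrt_one]
    simpa only [hdecomp, dotProduct_sum_smul_vecMulVec_mulVec_of_orthonormal hv σs h0]
      using sub_specNorm_le_of_rayleigh_le htop hunit
  have hres : σ1 * vnorm q ^ 2 ≤ vnorm q * specNorm H := by
    have hqM : q ⬝ᵥ Mstar *ᵥ a1 = 0 := by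
      rw [hdecomp, sum_smul_vecMulVec_mulVec]
      exact dotProduct_sum_smul_eq_zero (fun j hj => projResidual_dotProduct_of_mem hv a1 hj) _
    rw [vnorm_sq, projResidual_dotProduct_projResidual hv, ← projResidual_dotProduct_self]
    exact eigenvalue_mul_dotProduct_le heig ha1 hqM
  have hbound := sq_le_of_eigenvalue_mul_sq_le (hpos 0 hr) hH hσ1 (vnorm_nonneg q) hres
  rw [hqq] at hbound
  refine ⟨by linarith, ?_⟩
  rw [range_eq_Ico, sum_eq_sum_Ico_succ_bot hr] at hbound
  linarith

/-- Lower bound on the projection of the perturbed top eigenvector onto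
the column space of the unperturbed matrix, and on its alignment with the top eigenvector. -/
theorem inner_ub_to_inner_lb {d r : ℕ} (hr : 0 < r)
    (Mstar H M : Matrix (Fin d) (Fin d) ℝ)
    (hM : M = Mstar + H) (hHsym : H.IsSymm) (hMsym : M.IsSymm)
    (σs : ℕ → ℝ) (as : ℕ → Fin d → ℝ)
    (hanti : ∀ i j, i ≤ j → j < r → σs j ≤ σs i)
    (hpos : ∀ j, j < r → 0 < σs j)
    (hortho : ∀ i j, i < r → j < r → as i ⬝ᵥ as j = if i = j then 1 else 0)
    (hdecomp : Mstar = ∑ j ∈ Finset.range r, σs j • vecMulVec (as j) (as j))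
    (σ1 : ℝ) (a1 : Fin d → ℝ) (ha1 : vnorm a1 = 1)
    (heig : M.mulVec a1 = σ1 • a1)
    (htop : ∀ x : Fin d → ℝ, x ⬝ᵥ M.mulVec x ≤ σ1 * (x ⬝ᵥ x))
    (hH : specNorm H ≤ σs 0 / 8) :
    (1 - 2.4 * specNorm H ^ 2 / σs 0 ^ 2 ≤ ∑ j ∈ Finset.range r, (a1 ⬝ᵥ as j) ^ 2) ∧
    (1 - 2.4 * specNorm H ^ 2 / σs 0 ^ 2 - ∑ j ∈ Finset.Ico 1 r, (a1 ⬝ᵥ as j) ^ 2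
      ≤ (a1 ⬝ᵥ as 0) ^ 2) :=
  inner_ub_to_inner_lb_general hr Mstar H M hM σs as hpos hortho hdecomp σ1 a1 ha1 heig htop hH
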